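/- Let T > 0, let ψ ∈ C²([0,T] × [−M,M]) vanish on the lateral boundary {x = ±M} together with ∂ₜψ, and let a, ζ : [0,T] × [−M,M] → ℝ be continuous with a ≥ η > 0, 1/2 ≤ ζ(t) ≤ 1, ∂ₜζ ≥ c > 0 (ζ depending only on t). Suppose ψ satisfies ∂ₜψ + (1/α) a ∂ₓₓψ = 0 with ψ(T,·) = θ. Then ∫₀ᵀ∫_{−M}^{M} ∂ₜζ (∂ₓψ)² dx dt + (2/α) ∫₀ᵀ∫_{−M}^{M} ζ a (∂ₓₓψ)² dx dt ≤ ∫_{−M}^{M} ζ(T)(∂ₓθ)² dx; in particular c ∫₀ᵀ∫ (∂ₓψ)² dx dt + (1/α) ∫₀ᵀ∫ a (∂ₓₓψ)² dx dt ≤ ‖∂ₓθ‖²_{L²}. -/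

import Mathlib

open Function Real Set Filter Topology MeasureTheory intervalIntegral
open scoped Interval

/-! Write `P t = ∫ (∂ₓψ)²` and `Q t = ∫ a (∂ₓₓψ)²`. Differentiating under the integral sign and
integrating by parts in `x` (the boundary term vanishes because `∂ₜψ = 0` at `x = ±M`) gives
`P' = -2 ∫ ∂ₜψ ∂ₓₓψ = (2/α) Q` along the equation. Hence the integrand `ζ' P + (2/α) ζ Q` of the
left-hand side is `(ζ P)'`, which integrates to `ζ(T) P(T) - ζ(0) P(0) ≤ ζ(T) ‖∂ₓθ‖²`. The second
estimate follows from `c ≤ ζ'`, `1 ≤ 2ζ`, `ζ(T) ≤ 1` and `a ≥ 0`.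

The derivatives are taken within the closed rectangle, where they are continuous up to the
boundary; the `deriv`s of the statement agree with them off a null set. -/

section ParametricIntegral

variable {t₀ t₁ x₀ x₁ : ℝ} {F F' : ℝ → ℝ → ℝ}

theorem continuousOn_parametric_intervalIntegral_of_continuousOn (hx : x₀ ≤ x₁)
    (hF : ContinuousOn (uncurry F) (Icc t₀ t₁ ×ˢ Icc x₀ x₁)) :
    ContinuousOn (fun t => ∫ x in x₀..x₁, F t x) (Icc t₀ t₁) := by
  obtain ⟨C, hC⟩ := (isCompact_Icc.prod isCompact_Icc).exists_bound_of_continuousOn hF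
  have hI : Ι x₀ x₁ ⊆ Icc x₀ x₁ := uIcc_of_le hx ▸ uIoc_subset_uIcc
  intro t ht
  refine continuousWithinAt_of_dominated_interval (bound := fun _ => C) ?_ ?_
    intervalIntegrable_const (ae_of_all _ fun x hx' => hF.uncurry_right x (hI hx') t ht)
  · filter_upwards [self_mem_nhdsWithin] with τ hτ
    exact ((hF.uncurry_left τ hτ).mono hI).aestronglyMeasurable measurableSet_uIoc
  · filter_upwards [self_mem_nhdsWithin] with τ hτ
    exact ae_of_all _ fun x hx' => hC (τ, x) ⟨hτ, hI hx'⟩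

theorem hasDerivAt_parametric_intervalIntegral_of_continuousOn {t : ℝ} (hx : x₀ ≤ x₁)
    (hF : ContinuousOn (uncurry F) (Icc t₀ t₁ ×ˢ Icc x₀ x₁))
    (hF' : ContinuousOn (uncurry F') (Icc t₀ t₁ ×ˢ Icc x₀ x₁))
    (hFF' : ∀ τ ∈ Ioo t₀ t₁, ∀ x ∈ Icc x₀ x₁, HasDerivAt (F · x) (F' τ x) τ)
    (ht : t ∈ Ioo t₀ t₁) :
    HasDerivAt (fun τ => ∫ x in x₀..x₁, F τ x) (∫ x in x₀..x₁, F' t x) t := by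
  obtain ⟨C, hC⟩ := (isCompact_Icc.prod isCompact_Icc).exists_bound_of_continuousOn hF'
  have hI : Ι x₀ x₁ ⊆ Icc x₀ x₁ := uIcc_of_le hx ▸ uIoc_subset_uIcc
  have hIoo : Ioo t₀ t₁ ∈ 𝓝 t := Ioo_mem_nhds ht.1 ht.2
  refine (hasDerivAt_integral_of_dominated_loc_of_deriv_le (bound := fun _ => C) hIoo ?_
    ((hF.uncurry_left t (Ioo_subset_Icc_self ht)).intervalIntegrable_of_Icc hx)
    (((hF'.uncurry_left t (Ioo_subset_Icc_self ht)).mono hI).aestronglyMeasurable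
      measurableSet_uIoc)
    (ae_of_all _ fun x hx' τ hτ => hC (τ, x) ⟨Ioo_subset_Icc_self hτ, hI hx'⟩)
    intervalIntegrable_const (ae_of_all _ fun x hx' τ hτ => hFF' τ hτ x (hI hx'))).2
  filter_upwards [hIoo] with τ hτ
  exact ((hF.uncurry_left τ (Ioo_subset_Icc_self hτ)).mono hI).aestronglyMeasurable
    measurableSet_uIoc

theorem integral_integral_congr {f g : ℝ → ℝ → ℝ} (ht : t₀ ≤ t₁) (hx : x₀ ≤ x₁)
    (hfg : ∀ t ∈ Icc t₀ t₁, ∀ x ∈ Ioo x₀ x₁, f t x = g t x) :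
    ∫ t in t₀..t₁, ∫ x in x₀..x₁, f t x = ∫ t in t₀..t₁, ∫ x in x₀..x₁, g t x :=
  integral_congr fun t ht' =>
    integral_congr_Ioo_of_le hx (hfg t (uIcc_of_le ht ▸ ht'))

end ParametricIntegral

section Slices

variable {E G : Type*} [NormedAddCommGroup E] [NormedSpace ℝ E] [NormedAddCommGroup G]
  [NormedSpace ℝ G] {f : ℝ × ℝ → E} {f' : ℝ × ℝ →L[ℝ] E} {s : Set (ℝ × ℝ)} {t x : ℝ}

theorem HasDerivAt.clm_apply_const {F : ℝ → E →L[ℝ] G} {F' : E →L[ℝ] G}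
    (h : HasDerivAt F F' x) (v : E) : HasDerivAt (F · v) (F' v) x := by
  simpa using h.clm_apply (hasDerivAt_const x v)

theorem HasFDerivWithinAt.hasDerivAt_comp_prodMk_left (h : HasFDerivWithinAt f f' s (t, x))
    (hs : ∀ᶠ τ in 𝓝 t, (τ, x) ∈ s) : HasDerivAt (fun τ => f (τ, x)) (f' (1, 0)) t :=
  (h.comp_hasDerivWithinAt (s := {τ | (τ, x) ∈ s}) t
    ((hasDerivAt_id t).prodMk (hasDerivAt_const t x)).hasDerivWithinAt fun _ hτ => hτ).hasDerivAt hs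

theorem HasFDerivWithinAt.hasDerivAt_comp_prodMk_right (h : HasFDerivWithinAt f f' s (t, x))
    (hs : ∀ᶠ y in 𝓝 x, (t, y) ∈ s) : HasDerivAt (fun y => f (t, y)) (f' (0, 1)) x :=
  (h.comp_hasDerivWithinAt (s := {y | (t, y) ∈ s}) x
    ((hasDerivAt_const x t).prodMk (hasDerivAt_id x)).hasDerivWithinAt fun _ hy => hy).hasDerivAt hs

end Slices

section PartialDerivatives

variable (s : Set (ℝ × ℝ)) (ψ : ℝ → ℝ → ℝ)

/- Partial derivatives taken within `s`. On a closed rectangle they are continuous up to the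
boundary, where the plain `deriv` of a slice is a junk value. -/

noncomputable def partialT (t x : ℝ) : ℝ := fderivWithin ℝ (uncurry ψ) s (t, x) (1, 0)

noncomputable def partialX (t x : ℝ) : ℝ := fderivWithin ℝ (uncurry ψ) s (t, x) (0, 1)

noncomputable def partialXX (t x : ℝ) : ℝ :=
  fderivWithin ℝ (fderivWithin ℝ (uncurry ψ) s) s (t, x) (0, 1) (0, 1)

noncomputable def partialTX (t x : ℝ) : ℝ :=
  fderivWithin ℝ (fderivWithin ℝ (uncurry ψ) s) s (t, x) (1, 0) (0, 1)

variable {s ψ} {t x : ℝ} (hψ : ContDiffOn ℝ 2 (uncurry ψ) s)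
include hψ

theorem hasDerivAt_in_t (hst : ∀ᶠ τ in 𝓝 t, (τ, x) ∈ s) :
    HasDerivAt (ψ · x) (partialT s ψ t x) t :=
  (hψ.differentiableOn two_ne_zero _ hst.self_of_nhds).hasFDerivWithinAt
    |>.hasDerivAt_comp_prodMk_left hst

theorem hasDerivAt_in_x (hsx : ∀ᶠ y in 𝓝 x, (t, y) ∈ s) :
    HasDerivAt (ψ t) (partialX s ψ t x) x :=
  (hψ.differentiableOn two_ne_zero _ hsx.self_of_nhds).hasFDerivWithinAt
    |>.hasDerivAt_comp_prodMk_right hsx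

variable (hs : UniqueDiffOn ℝ s)
include hs

theorem contDiffOn_fderivWithin_of_contDiffOn_two :
    ContDiffOn ℝ 1 (fderivWithin ℝ (uncurry ψ) s) s :=
  hψ.fderivWithin hs (by norm_num)

theorem continuousOn_partialT : ContinuousOn (uncurry (partialT s ψ)) s :=
  (contDiffOn_fderivWithin_of_contDiffOn_two hψ hs).continuousOn.clm_apply continuousOn_const

theorem continuousOn_partialX : ContinuousOn (uncurry (partialX s ψ)) s :=
  (contDiffOn_fderivWithin_of_contDiffOn_two hψ hs).continuousOn.clm_apply continuousOn_const

theorem continuousOn_partialXX : ContinuousOn (uncurry (partialXX s ψ)) s :=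
  (((contDiffOn_fderivWithin_of_contDiffOn_two hψ hs).continuousOn_fderivWithin hs
    le_rfl).clm_apply continuousOn_const).clm_apply continuousOn_const

theorem continuousOn_partialTX : ContinuousOn (uncurry (partialTX s ψ)) s :=
  (((contDiffOn_fderivWithin_of_contDiffOn_two hψ hs).continuousOn_fderivWithin hs
    le_rfl).clm_apply continuousOn_const).clm_apply continuousOn_const

theorem hasDerivAt_partialX_in_t (hst : ∀ᶠ τ in 𝓝 t, (τ, x) ∈ s) :
    HasDerivAt (partialX s ψ · x) (partialTX s ψ t x) t :=
  (((contDiffOn_fderivWithin_of_contDiffOn_two hψ hs).differentiableOn one_ne_zero _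
    hst.self_of_nhds).hasFDerivWithinAt.hasDerivAt_comp_prodMk_left hst).clm_apply_const (0, 1)

theorem hasDerivAt_partialX_in_x (hsx : ∀ᶠ y in 𝓝 x, (t, y) ∈ s) :
    HasDerivAt (partialX s ψ t) (partialXX s ψ t x) x :=
  (((contDiffOn_fderivWithin_of_contDiffOn_two hψ hs).differentiableOn one_ne_zero _
    hsx.self_of_nhds).hasFDerivWithinAt.hasDerivAt_comp_prodMk_right hsx).clm_apply_const (0, 1)

theorem hasDerivAt_partialT_in_x (hp : (t, x) ∈ interior s) :
    HasDerivAt (partialT s ψ t) (partialTX s ψ t x) x := by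
  have hsx : ∀ᶠ y in 𝓝 x, (t, y) ∈ s :=
    (continuous_const.prodMk continuous_id).continuousAt.preimage_mem_nhds
      (mem_interior_iff_mem_nhds.1 hp)
  have h := ((contDiffOn_fderivWithin_of_contDiffOn_two hψ hs).differentiableOn one_ne_zero _
    hsx.self_of_nhds).hasFDerivWithinAt.hasDerivAt_comp_prodMk_right hsx
  have hsymm : IsSymmSndFDerivWithinAt ℝ (uncurry ψ) s (t, x) :=
    (hψ _ hsx.self_of_nhds).isSymmSndFDerivWithinAt (by simp) hs (subset_closure hp)
      hsx.self_of_nhds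
  exact (h.clm_apply_const (1, 0)).congr_deriv (hsymm (0, 1) (1, 0))

end PartialDerivatives

section Rectangle

variable {t₀ t₁ x₀ x₁ t x : ℝ} {ψ : ℝ → ℝ → ℝ}

theorem uniqueDiffOn_Icc_prod_Icc (hT : t₀ < t₁) (hX : x₀ < x₁) :
    UniqueDiffOn ℝ (Icc t₀ t₁ ×ˢ Icc x₀ x₁) :=
  (uniqueDiffOn_Icc hT).prod (uniqueDiffOn_Icc hX)

theorem eventually_mk_left_mem_Icc_prod_Icc (ht : t ∈ Ioo t₀ t₁) (hx : x ∈ Icc x₀ x₁) :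
    ∀ᶠ τ in 𝓝 t, (τ, x) ∈ Icc t₀ t₁ ×ˢ Icc x₀ x₁ :=
  Filter.mem_of_superset (Icc_mem_nhds ht.1 ht.2) fun _ hτ => ⟨hτ, hx⟩

theorem eventually_mk_right_mem_Icc_prod_Icc (ht : t ∈ Icc t₀ t₁) (hx : x ∈ Ioo x₀ x₁) :
    ∀ᶠ y in 𝓝 x, (t, y) ∈ Icc t₀ t₁ ×ˢ Icc x₀ x₁ :=
  Filter.mem_of_superset (Icc_mem_nhds hx.1 hx.2) fun _ hy => ⟨ht, hy⟩

theorem mk_mem_interior_Icc_prod_Icc (ht : t ∈ Ioo t₀ t₁) (hx : x ∈ Ioo x₀ x₁) :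
    (t, x) ∈ interior (Icc t₀ t₁ ×ˢ Icc x₀ x₁) := by
  rw [interior_prod_eq, interior_Icc, interior_Icc]
  exact ⟨ht, hx⟩

variable (hψ : ContDiffOn ℝ 2 (uncurry ψ) (Icc t₀ t₁ ×ˢ Icc x₀ x₁))
include hψ

theorem deriv_in_t_eq_partialT (ht : t ∈ Ioo t₀ t₁) (hx : x ∈ Icc x₀ x₁) :
    deriv (ψ · x) t = partialT (Icc t₀ t₁ ×ˢ Icc x₀ x₁) ψ t x :=
  (hasDerivAt_in_t hψ (eventually_mk_left_mem_Icc_prod_Icc ht hx)).deriv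

theorem deriv_in_x_eq_partialX (ht : t ∈ Icc t₀ t₁) (hx : x ∈ Ioo x₀ x₁) :
    deriv (ψ t) x = partialX (Icc t₀ t₁ ×ˢ Icc x₀ x₁) ψ t x :=
  (hasDerivAt_in_x hψ (eventually_mk_right_mem_Icc_prod_Icc ht hx)).deriv

theorem deriv_deriv_in_x_eq_partialXX (hT : t₀ < t₁) (hX : x₀ < x₁) (ht : t ∈ Icc t₀ t₁)
    (hx : x ∈ Ioo x₀ x₁) :
    deriv (deriv (ψ t)) x = partialXX (Icc t₀ t₁ ×ˢ Icc x₀ x₁) ψ t x := by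
  have hd : deriv (ψ t) =ᶠ[𝓝 x] partialX (Icc t₀ t₁ ×ˢ Icc x₀ x₁) ψ t :=
    Filter.eventually_of_mem (Ioo_mem_nhds hx.1 hx.2) fun y hy => deriv_in_x_eq_partialX hψ ht hy
  rw [hd.deriv_eq]
  exact (hasDerivAt_partialX_in_x hψ (uniqueDiffOn_Icc_prod_Icc hT hX)
    (eventually_mk_right_mem_Icc_prod_Icc ht hx)).deriv

theorem hasDerivAt_integral_partialX_sq (hT : t₀ < t₁) (hX : x₀ < x₁) (ht : t ∈ Ioo t₀ t₁)
    (h₀ : partialT (Icc t₀ t₁ ×ˢ Icc x₀ x₁) ψ t x₀ = 0)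
    (h₁ : partialT (Icc t₀ t₁ ×ˢ Icc x₀ x₁) ψ t x₁ = 0) :
    HasDerivAt (fun τ => ∫ x in x₀..x₁, partialX (Icc t₀ t₁ ×ˢ Icc x₀ x₁) ψ τ x ^ 2)
      (-2 * ∫ x in x₀..x₁,
        partialT (Icc t₀ t₁ ×ˢ Icc x₀ x₁) ψ t x * partialXX (Icc t₀ t₁ ×ˢ Icc x₀ x₁) ψ t x) t := by
  set R := Icc t₀ t₁ ×ˢ Icc x₀ x₁
  have hR := uniqueDiffOn_Icc_prod_Icc hT hX
  have hIcc : Icc x₀ x₁ = [[x₀, x₁]] := (uIcc_of_le hX.le).symm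
  have ht' := Ioo_subset_Icc_self ht
  have hleibniz := hasDerivAt_parametric_intervalIntegral_of_continuousOn hX.le
    (F := fun τ x => partialX R ψ τ x ^ 2)
    (F' := fun τ x => 2 * partialX R ψ τ x * partialTX R ψ τ x)
    ((continuousOn_partialX hψ hR).fun_pow 2)
    ((continuousOn_const.fun_mul (continuousOn_partialX hψ hR)).fun_mul
      (continuousOn_partialTX hψ hR))
    (fun τ hτ x hx => by
      simpa using
        (hasDerivAt_partialX_in_t hψ hR (eventually_mk_left_mem_Icc_prod_Icc hτ hx)).fun_pow 2)
    ht
  have hibp := integral_mul_deriv_eq_deriv_mul_of_hasDerivAt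
    (hIcc ▸ (continuousOn_partialT hψ hR).uncurry_left t ht')
    (hIcc ▸ (continuousOn_partialX hψ hR).uncurry_left t ht')
    (fun x hx => hasDerivAt_partialT_in_x hψ hR (mk_mem_interior_Icc_prod_Icc ht
      (by simpa [hX.le] using hx)))
    (fun x hx => hasDerivAt_partialX_in_x hψ hR (eventually_mk_right_mem_Icc_prod_Icc ht'
      (by simpa [hX.le] using hx)))
    (((continuousOn_partialTX hψ hR).uncurry_left t ht').intervalIntegrable_of_Icc hX.le)
    (((continuousOn_partialXX hψ hR).uncurry_left t ht').intervalIntegrable_of_Icc hX.le)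
  rw [h₀, h₁, zero_mul, zero_mul, sub_zero, zero_sub] at hibp
  convert hleibniz using 1
  rw [hibp, neg_mul_neg, ← intervalIntegral.integral_const_mul]
  congr 1 with x
  ring

end Rectangle

theorem mul_integral_add_mul_integral_le {t₀ t₁ α c : ℝ} {ζ P Q : ℝ → ℝ} (hT : t₀ ≤ t₁)
    (hα : 0 ≤ α) (hζ : ContDiff ℝ 1 ζ) (hP : ContinuousOn P (Icc t₀ t₁))
    (hQ : ContinuousOn Q (Icc t₀ t₁)) (hP₀ : ∀ t ∈ Icc t₀ t₁, 0 ≤ P t)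
    (hQ₀ : ∀ t ∈ Icc t₀ t₁, 0 ≤ Q t) (hζlb : ∀ t ∈ Icc t₀ t₁, 1 / 2 ≤ ζ t)
    (hζ' : ∀ t ∈ Icc t₀ t₁, c ≤ deriv ζ t) :
    c * (∫ t in t₀..t₁, P t) + 1 / α * ∫ t in t₀..t₁, Q t ≤
      ∫ t in t₀..t₁, deriv ζ t * P t + ζ t * (2 / α * Q t) := by
  have hζc := hζ.continuous.continuousOn (s := Icc t₀ t₁)
  have hζc' := (hζ.continuous_deriv le_rfl).continuousOn (s := Icc t₀ t₁)
  rw [← intervalIntegral.integral_const_mul, ← intervalIntegral.integral_const_mul,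
    ← integral_add ((hP.intervalIntegrable_of_Icc hT).const_mul _)
      ((hQ.intervalIntegrable_of_Icc hT).const_mul _)]
  refine integral_mono_on hT
    (((continuousOn_const.mul hP).add (continuousOn_const.mul hQ)).intervalIntegrable_of_Icc hT)
    (((hζc'.mul hP).add (hζc.mul (continuousOn_const.mul hQ))).intervalIntegrable_of_Icc hT)
    fun t ht => add_le_add (mul_le_mul_of_nonneg_right (hζ' t ht) (hP₀ t ht)) ?_
  calc 1 / α * Q t ≤ 2 * ζ t * (1 / α * Q t) :=
        le_mul_of_one_le_left (mul_nonneg (by positivity) (hQ₀ t ht)) (by linarith [hζlb t ht])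
    _ = ζ t * (2 / α * Q t) := by ring

section EnergyEstimate

variable {t₀ t₁ x₀ x₁ α : ℝ} {ψ a : ℝ → ℝ → ℝ} {ζ : ℝ → ℝ}
  (hT : t₀ < t₁) (hX : x₀ < x₁) (hψ : ContDiffOn ℝ 2 (uncurry ψ) (Icc t₀ t₁ ×ˢ Icc x₀ x₁))
  (ha : ContinuousOn (uncurry a) (Icc t₀ t₁ ×ˢ Icc x₀ x₁))
include hT hX hψ ha

theorem weighted_energy_identity (hζ : ContDiff ℝ 1 ζ)
    (hbdry : ∀ t ∈ Ioo t₀ t₁, partialT (Icc t₀ t₁ ×ˢ Icc x₀ x₁) ψ t x₀ = 0 ∧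
      partialT (Icc t₀ t₁ ×ˢ Icc x₀ x₁) ψ t x₁ = 0)
    (hpde : ∀ t ∈ Ioo t₀ t₁, ∀ x ∈ Ioo x₀ x₁, partialT (Icc t₀ t₁ ×ˢ Icc x₀ x₁) ψ t x +
      1 / α * a t x * partialXX (Icc t₀ t₁ ×ˢ Icc x₀ x₁) ψ t x = 0) :
    ∫ t in t₀..t₁, deriv ζ t * (∫ x in x₀..x₁, partialX (Icc t₀ t₁ ×ˢ Icc x₀ x₁) ψ t x ^ 2) +
        ζ t * (2 / α * ∫ x in x₀..x₁, a t x * partialXX (Icc t₀ t₁ ×ˢ Icc x₀ x₁) ψ t x ^ 2) =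
      ζ t₁ * (∫ x in x₀..x₁, partialX (Icc t₀ t₁ ×ˢ Icc x₀ x₁) ψ t₁ x ^ 2) -
        ζ t₀ * ∫ x in x₀..x₁, partialX (Icc t₀ t₁ ×ˢ Icc x₀ x₁) ψ t₀ x ^ 2 := by
  set R := Icc t₀ t₁ ×ˢ Icc x₀ x₁
  have hR := uniqueDiffOn_Icc_prod_Icc hT hX
  have hU : ContinuousOn (uncurry fun t x => partialX R ψ t x ^ 2) R :=
    (continuousOn_partialX hψ hR).fun_pow 2
  have hW : ContinuousOn (uncurry fun t x => a t x * partialXX R ψ t x ^ 2) R :=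
    ha.fun_mul ((continuousOn_partialXX hψ hR).fun_pow 2)
  refine integral_deriv_mul_eq_sub_of_hasDerivAt hζ.continuous.continuousOn
    (uIcc_of_le hT.le ▸ continuousOn_parametric_intervalIntegral_of_continuousOn hX.le hU)
    (fun t _ => (hζ.differentiable one_ne_zero t).hasDerivAt) (fun t ht => ?_)
    ((hζ.continuous_deriv le_rfl).intervalIntegrable _ _)
    (((continuousOn_parametric_intervalIntegral_of_continuousOn hX.le hW).intervalIntegrable_of_Icc
      hT.le).const_mul _)
  rw [min_eq_left hT.le, max_eq_right hT.le] at ht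
  refine (hasDerivAt_integral_partialX_sq hψ hT hX ht (hbdry t ht).1 (hbdry t ht).2).congr_deriv ?_
  rw [integral_congr_Ioo_of_le hX.le (g := fun x => -(1 / α) * (a t x * partialXX R ψ t x ^ 2))
    fun x hx => by linear_combination partialXX R ψ t x * hpde t ht x hx,
    intervalIntegral.integral_const_mul]
  ring

theorem weighted_energy_estimate {c : ℝ} (hα : 0 ≤ α)
    (ha₀ : ∀ t ∈ Icc t₀ t₁, ∀ x ∈ Icc x₀ x₁, 0 ≤ a t x) (hζ : ContDiff ℝ 1 ζ)
    (hζlb : ∀ t ∈ Icc t₀ t₁, 1 / 2 ≤ ζ t) (hζub : ζ t₁ ≤ 1)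
    (hζ' : ∀ t ∈ Icc t₀ t₁, c ≤ deriv ζ t)
    (hbdry : ∀ t ∈ Ioo t₀ t₁, partialT (Icc t₀ t₁ ×ˢ Icc x₀ x₁) ψ t x₀ = 0 ∧
      partialT (Icc t₀ t₁ ×ˢ Icc x₀ x₁) ψ t x₁ = 0)
    (hpde : ∀ t ∈ Ioo t₀ t₁, ∀ x ∈ Ioo x₀ x₁, partialT (Icc t₀ t₁ ×ˢ Icc x₀ x₁) ψ t x +
      1 / α * a t x * partialXX (Icc t₀ t₁ ×ˢ Icc x₀ x₁) ψ t x = 0) :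
    (∫ t in t₀..t₁, ∫ x in x₀..x₁, deriv ζ t * partialX (Icc t₀ t₁ ×ˢ Icc x₀ x₁) ψ t x ^ 2 +
        2 / α * ζ t * a t x * partialXX (Icc t₀ t₁ ×ˢ Icc x₀ x₁) ψ t x ^ 2) ≤
      ∫ x in x₀..x₁, ζ t₁ * partialX (Icc t₀ t₁ ×ˢ Icc x₀ x₁) ψ t₁ x ^ 2 ∧
    c * (∫ t in t₀..t₁, ∫ x in x₀..x₁, partialX (Icc t₀ t₁ ×ˢ Icc x₀ x₁) ψ t x ^ 2) +
        1 / α * (∫ t in t₀..t₁, ∫ x in x₀..x₁,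
          a t x * partialXX (Icc t₀ t₁ ×ˢ Icc x₀ x₁) ψ t x ^ 2) ≤
      ∫ x in x₀..x₁, partialX (Icc t₀ t₁ ×ˢ Icc x₀ x₁) ψ t₁ x ^ 2 := by
  set R := Icc t₀ t₁ ×ˢ Icc x₀ x₁
  have hR := uniqueDiffOn_Icc_prod_Icc hT hX
  have hU : ContinuousOn (uncurry fun t x => partialX R ψ t x ^ 2) R :=
    (continuousOn_partialX hψ hR).fun_pow 2
  have hW : ContinuousOn (uncurry fun t x => a t x * partialXX R ψ t x ^ 2) R :=
    ha.fun_mul ((continuousOn_partialXX hψ hR).fun_pow 2)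
  set P := fun t => ∫ x in x₀..x₁, partialX R ψ t x ^ 2
  set Q := fun t => ∫ x in x₀..x₁, a t x * partialXX R ψ t x ^ 2
  have hPc : ContinuousOn P (Icc t₀ t₁) :=
    continuousOn_parametric_intervalIntegral_of_continuousOn hX.le hU
  have hQc : ContinuousOn Q (Icc t₀ t₁) :=
    continuousOn_parametric_intervalIntegral_of_continuousOn hX.le hW
  have hP₀ : ∀ t, 0 ≤ P t := fun t => integral_nonneg hX.le fun x _ => sq_nonneg _
  have hQ₀ : ∀ t ∈ Icc t₀ t₁, 0 ≤ Q t := fun t ht =>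
    integral_nonneg hX.le fun x hx => mul_nonneg (ha₀ t ht x hx) (sq_nonneg _)
  have henergy := weighted_energy_identity hT hX hψ ha hζ hbdry hpde
  have hsplit : ∀ t ∈ uIcc t₀ t₁, ∫ x in x₀..x₁, deriv ζ t * partialX R ψ t x ^ 2 +
      2 / α * ζ t * a t x * partialXX R ψ t x ^ 2 = deriv ζ t * P t + ζ t * (2 / α * Q t) := by
    intro t ht
    rw [uIcc_of_le hT.le] at ht
    simp only [mul_assoc (2 / α * ζ t)]
    rw [integral_add (((hU.uncurry_left t ht).intervalIntegrable_of_Icc hX.le).const_mul _)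
      (((hW.uncurry_left t ht).intervalIntegrable_of_Icc hX.le).const_mul _),
      intervalIntegral.integral_const_mul, intervalIntegral.integral_const_mul]
    ring
  rw [integral_congr hsplit, henergy, intervalIntegral.integral_const_mul]
  have hζ₀ := hζlb t₀ (left_mem_Icc.2 hT.le)
  refine ⟨by nlinarith [hP₀ t₀], ?_⟩
  calc c * (∫ t in t₀..t₁, P t) + 1 / α * ∫ t in t₀..t₁, Q t
      ≤ ∫ t in t₀..t₁, deriv ζ t * P t + ζ t * (2 / α * Q t) :=
        mul_integral_add_mul_integral_le hT.le hα hζ hPc hQc (fun t _ => hP₀ t) hQ₀ hζlb hζ'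
    _ = ζ t₁ * P t₁ - ζ t₀ * P t₀ := henergy
    _ ≤ P t₁ := by nlinarith [hP₀ t₀, hP₀ t₁]

end EnergyEstimate

theorem dual_problem_energy_estimate_general
    (α T M η c : ℝ) (hα : 1 < α) (hT : 0 < T) (hM : 0 < M) (hη : 0 < η)
    (ψ : ℝ → ℝ → ℝ) (a : ℝ → ℝ → ℝ) (ζ : ℝ → ℝ) (θ : ℝ → ℝ)
    (hψ : ContDiffOn ℝ 2 (fun p : ℝ × ℝ => ψ p.1 p.2) (Set.Icc 0 T ×ˢ Set.Icc (-M) M))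
    (hbd : ∀ t ∈ Set.Icc (0 : ℝ) T, ψ t (-M) = 0 ∧ ψ t M = 0 ∧
      deriv (fun τ => ψ τ (-M)) t = 0 ∧ deriv (fun τ => ψ τ M) t = 0)
    (ha : ContinuousOn (fun p : ℝ × ℝ => a p.1 p.2) (Set.Icc 0 T ×ˢ Set.Icc (-M) M))
    (haη : ∀ t ∈ Set.Icc (0 : ℝ) T, ∀ x ∈ Set.Icc (-M) M, η ≤ a t x)
    (hζC1 : ContDiff ℝ 1 ζ)
    (hζlb : ∀ t ∈ Set.Icc (0 : ℝ) T, 1 / 2 ≤ ζ t)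
    (hζub : ∀ t ∈ Set.Icc (0 : ℝ) T, ζ t ≤ 1)
    (hζ' : ∀ t ∈ Set.Icc (0 : ℝ) T, c ≤ deriv ζ t)
    (heq : ∀ t ∈ Set.Icc (0 : ℝ) T, ∀ x ∈ Set.Icc (-M) M,
      deriv (fun τ => ψ τ x) t + (1 / α) * a t x * deriv (deriv (fun y => ψ t y)) x = 0)
    (hθ : ∀ x ∈ Set.Icc (-M) M, ψ T x = θ x) :
    (∫ t in (0 : ℝ)..T, ∫ x in (-M)..M,
        deriv ζ t * (deriv (fun y => ψ t y) x) ^ 2 +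
          (2 / α) * ζ t * a t x * (deriv (deriv (fun y => ψ t y)) x) ^ 2)
      ≤ ∫ x in (-M)..M, ζ T * (deriv θ x) ^ 2 ∧
    c * (∫ t in (0 : ℝ)..T, ∫ x in (-M)..M, (deriv (fun y => ψ t y) x) ^ 2) +
      (1 / α) * (∫ t in (0 : ℝ)..T, ∫ x in (-M)..M,
        a t x * (deriv (deriv (fun y => ψ t y)) x) ^ 2)
      ≤ ∫ x in (-M)..M, (deriv θ x) ^ 2 := by
  have hMM : -M < M := by linarith
  have hT' : T ∈ Icc 0 T := right_mem_Icc.2 hT.le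
  have hdt : ∀ t ∈ Ioo 0 T, ∀ x ∈ Icc (-M) M,
      deriv (fun τ => ψ τ x) t = partialT (Icc 0 T ×ˢ Icc (-M) M) ψ t x :=
    fun t ht x hx => deriv_in_t_eq_partialT hψ ht hx
  have hθ' : ∀ x ∈ Ioo (-M) M, deriv θ x = partialX (Icc 0 T ×ˢ Icc (-M) M) ψ T x := fun x hx =>
    (Filter.EventuallyEq.deriv_eq (Filter.eventually_of_mem (Ioo_mem_nhds hx.1 hx.2) fun y hy =>
      (hθ y (Ioo_subset_Icc_self hy)).symm)).trans (deriv_in_x_eq_partialX hψ hT' hx)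
  obtain ⟨h₁, h₂⟩ := weighted_energy_estimate hT hMM hψ ha (by linarith : (0 : ℝ) ≤ α)
    (fun t ht x hx => hη.le.trans (haη t ht x hx)) hζC1 hζlb (hζub T hT') hζ'
    (fun t ht => ⟨hdt t ht (-M) (left_mem_Icc.2 hMM.le) ▸ (hbd t (Ioo_subset_Icc_self ht)).2.2.1,
      hdt t ht M (right_mem_Icc.2 hMM.le) ▸ (hbd t (Ioo_subset_Icc_self ht)).2.2.2⟩)
    (fun t ht x hx => by
      simpa only [hdt t ht x (Ioo_subset_Icc_self hx),
        deriv_deriv_in_x_eq_partialXX hψ hT hMM (Ioo_subset_Icc_self ht) hx] using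
        heq t (Ioo_subset_Icc_self ht) x (Ioo_subset_Icc_self hx))
  refine ⟨(Eq.trans_le ?_ h₁).trans_eq ?_, (Eq.trans_le ?_ h₂).trans_eq ?_⟩
  · exact integral_integral_congr hT.le hMM.le fun t ht x hx => by
      rw [deriv_in_x_eq_partialX hψ ht hx, deriv_deriv_in_x_eq_partialXX hψ hT hMM ht hx]
  · exact integral_congr_Ioo_of_le hMM.le fun x hx => by rw [hθ' x hx]
  · congr 2
    · exact integral_integral_congr hT.le hMM.le fun t ht x hx => by
        rw [deriv_in_x_eq_partialX hψ ht hx]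
    · exact integral_integral_congr hT.le hMM.le fun t ht x hx => by
        rw [deriv_deriv_in_x_eq_partialXX hψ hT hMM ht hx]
  · exact integral_congr_Ioo_of_le hMM.le fun x hx => by rw [hθ' x hx]

/-- Energy estimate for the backward dual parabolic problem
`∂ₜψ + (1/α) a ∂ₓₓψ = 0` on `[0,T] × [-M,M]`. -/
theorem dual_problem_energy_estimate
    (α T M η c : ℝ) (hα : 1 < α) (hT : 0 < T) (hM : 0 < M) (hη : 0 < η) (hc : 0 < c)
    (ψ : ℝ → ℝ → ℝ) (a : ℝ → ℝ → ℝ) (ζ : ℝ → ℝ) (θ : ℝ → ℝ)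
    (hψ : ContDiffOn ℝ 2 (fun p : ℝ × ℝ => ψ p.1 p.2) (Set.Icc 0 T ×ˢ Set.Icc (-M) M))
    (hbd : ∀ t ∈ Set.Icc (0 : ℝ) T, ψ t (-M) = 0 ∧ ψ t M = 0 ∧
      deriv (fun τ => ψ τ (-M)) t = 0 ∧ deriv (fun τ => ψ τ M) t = 0)
    (ha : ContinuousOn (fun p : ℝ × ℝ => a p.1 p.2) (Set.Icc 0 T ×ˢ Set.Icc (-M) M))
    (haη : ∀ t ∈ Set.Icc (0 : ℝ) T, ∀ x ∈ Set.Icc (-M) M, η ≤ a t x)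
    (hζC1 : ContDiff ℝ 1 ζ)
    (hζlb : ∀ t ∈ Set.Icc (0 : ℝ) T, 1 / 2 ≤ ζ t)
    (hζub : ∀ t ∈ Set.Icc (0 : ℝ) T, ζ t ≤ 1)
    (hζ' : ∀ t ∈ Set.Icc (0 : ℝ) T, c ≤ deriv ζ t)
    (heq : ∀ t ∈ Set.Icc (0 : ℝ) T, ∀ x ∈ Set.Icc (-M) M,
      deriv (fun τ => ψ τ x) t + (1 / α) * a t x * deriv (deriv (fun y => ψ t y)) x = 0)
    (hθ : ∀ x ∈ Set.Icc (-M) M, ψ T x = θ x) :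
    (∫ t in (0 : ℝ)..T, ∫ x in (-M)..M,
        deriv ζ t * (deriv (fun y => ψ t y) x) ^ 2 +
          (2 / α) * ζ t * a t x * (deriv (deriv (fun y => ψ t y)) x) ^ 2)
      ≤ ∫ x in (-M)..M, ζ T * (deriv θ x) ^ 2 ∧
    c * (∫ t in (0 : ℝ)..T, ∫ x in (-M)..M, (deriv (fun y => ψ t y) x) ^ 2) +
      (1 / α) * (∫ t in (0 : ℝ)..T, ∫ x in (-M)..M,
        a t x * (deriv (deriv (fun y => ψ t y)) x) ^ 2)
      ≤ ∫ x in (-M)..M, (deriv θ x) ^ 2 :=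
  dual_problem_energy_estimate_general α T M η c hα hT hM hη ψ a ζ θ hψ hbd ha haη hζC1 hζlb hζub
    hζ' heq hθ
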